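/- Let a ≥ b ≥ c ≥ 2, n = a+b+c−1, and let I = i_1⋯i_z be a composition of n with w_I > 0 that has a suffix of modulus exactly a (i.e. I ∈ A). Then c'_I ≥ Δ_I(b+c−1), where c'_I = Σ_{k=2}^{c} Θ⁺_I(k) − Σ_{k=a}^{a+c−2} Θ⁻_{\overline{φ(I)}}(k) + Δ_I(b+c−1); equivalently, Σ_{k=2}^{c} Θ⁺_I(k) ≥ Σ_{k=a}^{a+c−2} Θ⁻_{\overline{φ(I)}}(k). -/

import Mathlib

/-!
Write `I = i₁ · P · Q` with `Q` the suffix of modulus `a`, so that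
`reverse(φ(I)) = reverse(Q) · P · i₁`. For `k ∈ [2, c]` the smallest partial sum of `I` that is
`≥ k` is `i₁ + s`, where `s` is the smallest partial sum of `P` that is `≥ k − i₁`; for
`k = a + m` with `m ∈ [0, c − 2]` some partial sum of `reverse(φ(I))` is `a + s'`, where `s'` is the
largest partial sum of `P` that is `≤ m`. Both sides thus become sums of gaps to the set `S` of
partial sums of `P`, i.e. numbers of integer intervals avoiding `S` (on the right, avoiding
`i₁ + S`), and translating intervals gives an injection from the left-hand ones to the
right-hand ones.
-/

open scoped Classical
open MvPolynomial Finset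

noncomputable section

/-- `σ⁺_I(a)`: the minimal partial sum of `I` that is at least `a`. -/
def sigmaP (I : List ℕ) (a : ℝ) : ℝ :=
  sInf {x : ℝ | ∃ k ≤ I.length, x = ((I.take k).sum : ℝ) ∧ a ≤ x}

/-- `Θ⁺_I(a) = σ⁺_I(a) − a`. -/
def thetaP (I : List ℕ) (a : ℝ) : ℝ := sigmaP I a - a

/-- `σ⁻_I(a)`: the maximal partial sum of `I` that is at most `a`. -/
def sigmaM (I : List ℕ) (a : ℝ) : ℝ :=
  sSup {x : ℝ | ∃ k ≤ I.length, x = ((I.take k).sum : ℝ) ∧ x ≤ a}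

/-- `Θ⁻_I(a) = a − σ⁻_I(a)`. -/
def thetaM (I : List ℕ) (a : ℝ) : ℝ := a - sigmaM I a

/-- `w_I = i₁(i₂−1)⋯(i_z−1)`. -/
def wI : List ℕ → ℕ
  | [] => 1
  | i :: t => i * (t.map (· - 1)).prod

/-- `e_I`: the product of elementary symmetric polynomials indexed by the parts of `I`,
in `N` variables. -/
def eComp (N : ℕ) (I : List ℕ) : MvPolynomial (Fin N) ℝ :=
  (I.map fun i => MvPolynomial.esymm (Fin N) ℝ i).prod

/-- The chromatic symmetric function of a graph, truncated to `N` variables. -/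
def csf {V : Type} [Fintype V] (G : SimpleGraph V) (N : ℕ) : MvPolynomial (Fin N) ℝ :=
  ∑ κ : V → Fin N,
    if ∀ u v, G.Adj u v → κ u ≠ κ v then ∏ v, MvPolynomial.X (κ v) else 0

/-- Add a single edge `uv` to a graph. -/
def addE {V : Type} (G : SimpleGraph V) (u v : V) : SimpleGraph V :=
  G ⊔ SimpleGraph.fromRel fun x y => x = u ∧ y = v

/-- The list of consecutive pairs of a list of vertices. -/
def chainE (l : List ℕ) : List (ℕ × ℕ) := l.zip l.tail

/-- The simple graph on `Fin n` with the given list of edges. -/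
def graphOfEdges (n : ℕ) (E : List (ℕ × ℕ)) : SimpleGraph (Fin n) :=
  SimpleGraph.fromRel fun u v => ((u : ℕ), (v : ℕ)) ∈ E

/-- The path on `n` vertices. -/
def pathG (n : ℕ) : SimpleGraph (Fin n) := graphOfEdges n (chainE (List.range n))

/-- The cycle on `n` vertices. -/
def cycleG (n : ℕ) : SimpleGraph (Fin n) :=
  graphOfEdges n (chainE (List.range n ++ [0]))

/-- The tadpole `C_a^l`: a cycle on `a` vertices with a path of `l` edges attached. -/
def tadpoleG (a l : ℕ) : SimpleGraph (Fin (a + l)) :=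
  graphOfEdges (a + l)
    (chainE (List.range a ++ [0]) ++ chainE (0 :: (List.range l).map (· + a)))

/-- The theta graph `θ_{abc}`: two vertices (`0` and `a+b+c-2`) joined by three internally
disjoint paths of lengths `a`, `b`, `c`. -/
def thetaG (a b c : ℕ) : SimpleGraph (Fin (a + b + c - 1)) :=
  graphOfEdges (a + b + c - 1)
    (chainE (0 :: ((List.range (a - 1)).map (· + 1) ++ [a + b + c - 2])) ++
     chainE (0 :: ((List.range (b - 1)).map (· + a) ++ [a + b + c - 2])) ++
     chainE (0 :: ((List.range (c - 1)).map (· + (a + b - 1)) ++ [a + b + c - 2])))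

/-- The index `p` defined by `m = i₁ + ⋯ + i_{p-1} + s` with `1 ≤ s ≤ i_p`:
the least `k` with `i₁ + ⋯ + i_k ≥ m`. -/
def pIdx (I : List ℕ) (m : ℕ) : ℕ := sInf {k | m ≤ (I.take k).sum}

/-- The number `s` defined by `m = i₁ + ⋯ + i_{p-1} + s` with `1 ≤ s ≤ i_p`. -/
def sVal (I : List ℕ) (m : ℕ) : ℕ := m - (I.take (pIdx I m - 1)).sum

/-- The index `q` defined by `m = i₂ + ⋯ + i_q + t` with `1 ≤ t ≤ i_{q+1}`
(convention `i_{z+1} = i₁`). -/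
def qIdx (I : List ℕ) (m : ℕ) : ℕ := sInf {k | m ≤ ((I.tail ++ I.take 1).take k).sum}

/-- The number `t` defined by `m = i₂ + ⋯ + i_q + t` with `1 ≤ t ≤ i_{q+1}`. -/
def tVal (I : List ℕ) (m : ℕ) : ℕ := m - ((I.tail ++ I.take 1).take (qIdx I m - 1)).sum

/-- The part `i_p`. -/
def ipPart (I : List ℕ) (m : ℕ) : ℕ := I.getD (pIdx I m - 1) 0

/-- The second elementary symmetric polynomial evaluated on a list. -/
def e2 : List ℕ → ℤ
  | [] => 0
  | x :: t => (x : ℤ) * t.sum + e2 t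

/-- The cycle-chord coefficient `Δ_I(m)`. -/
def DeltaI (I : List ℕ) (m : ℕ) : ℤ :=
  if (I.headI : ℤ) ≤ (ipPart I m : ℤ) - sVal I m then
    (sVal I m : ℤ) * ((ipPart I m : ℤ) - sVal I m - I.headI)
  else
    e2 ((ipPart I m - sVal I m) ::
        ((I.drop (pIdx I m)).take (qIdx I m - pIdx I m) ++ [tVal I m]))

/-- The length of the prefix `P` in the decomposition `I = PQ`, where `Q` is the shortest
suffix of `I` with `|Q| ≥ a`. -/
def kPhi (a : ℕ) (I : List ℕ) : ℕ := sSup {j | j ≤ I.length ∧ a ≤ (I.drop j).sum}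

/-- The transformation `φ`: writing `I = PQ` with `Q` the shortest suffix of modulus `≥ a`,
`φ(I) = I` if `Q = I`, and otherwise `φ(I) = i₁ · reverse(P∖i₁) · Q`. -/
def phi (a : ℕ) (I : List ℕ) : List ℕ :=
  if kPhi a I = 0 then I
  else I.take 1 ++ ((I.drop 1).take (kPhi a I - 1)).reverse ++ I.drop (kPhi a I)

/-- The starting position of the longest suffix `R_I` of `I` of modulus `≤ a`. -/
def rIdx (a : ℕ) (I : List ℕ) : ℕ := sInf {j | (I.drop j).sum ≤ a}

/-- The partial reversal `ψ(I) = reverse(L_I) R_I`, where `R_I` is the longest suffix of `I`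
of modulus `≤ a` and `L_I` is the complementary prefix. -/
def psi (a : ℕ) (I : List ℕ) : List ℕ :=
  (I.take (rIdx a I)).reverse ++ I.drop (rIdx a I)

/-- The clock coefficient `D_I = Θ⁺_I(2) − Θ⁻_{reverse(φ(I))}(a) + Δ_I(b+1)`. -/
def DI (a b : ℕ) (I : List ℕ) : ℝ :=
  thetaP I 2 - thetaM (phi a I).reverse a + (DeltaI I (b + 1) : ℝ)

end

def prefixSums (l : List ℕ) : Set ℕ := Set.range fun j => (l.take j).sum

noncomputable def ceilPrefixSum (l : List ℕ) (m : ℕ) : ℕ := sInf {x ∈ prefixSums l | m ≤ x}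

noncomputable def floorPrefixSum (l : List ℕ) (m : ℕ) : ℕ := sSup {x ∈ prefixSums l | x ≤ m}

section PrefixSums

variable (l : List ℕ) (m : ℕ)

theorem zero_mem_prefixSums : 0 ∈ prefixSums l := ⟨0, by simp⟩

theorem sum_mem_prefixSums : l.sum ∈ prefixSums l := ⟨l.length, by simp⟩

theorem bddAbove_prefixSums_le : BddAbove {x ∈ prefixSums l | x ≤ m} := ⟨m, fun _ hx => hx.2⟩

theorem floorPrefixSum_mem : floorPrefixSum l m ∈ {x ∈ prefixSums l | x ≤ m} :=
  Nat.sSup_mem ⟨0, zero_mem_prefixSums l, m.zero_le⟩ (bddAbove_prefixSums_le l m)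

theorem floorPrefixSum_le : floorPrefixSum l m ≤ m := (floorPrefixSum_mem l m).2

theorem le_floorPrefixSum {j : ℕ} (h : (l.take j).sum ≤ m) :
    (l.take j).sum ≤ floorPrefixSum l m :=
  le_csSup (bddAbove_prefixSums_le l m) ⟨⟨j, rfl⟩, h⟩

theorem exists_floorPrefixSum_eq : ∃ j ≤ l.length, floorPrefixSum l m = (l.take j).sum := by
  obtain ⟨⟨j, hj⟩, -⟩ := floorPrefixSum_mem l m
  exact ⟨min j l.length, min_le_right _ _, hj.symm.trans (congrArg _ List.take_eq_take_min)⟩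

theorem ceilPrefixSum_le {j : ℕ} (h : m ≤ (l.take j).sum) : ceilPrefixSum l m ≤ (l.take j).sum :=
  Nat.sInf_le ⟨⟨j, rfl⟩, h⟩

theorem ceilPrefixSum_mem (h : m ≤ l.sum) : ceilPrefixSum l m ∈ {x ∈ prefixSums l | m ≤ x} :=
  Nat.sInf_mem ⟨l.sum, sum_mem_prefixSums l, h⟩

theorem lt_ceilPrefixSum_of_floorPrefixSum_lt {y : ℕ} (hy : floorPrefixSum l m < y)
    (hyl : y ≤ l.sum) : m < ceilPrefixSum l y := by
  obtain ⟨⟨j, hj : (l.take j).sum = ceilPrefixSum l y⟩, hyj⟩ := ceilPrefixSum_mem l y hyl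
  by_contra! h
  have := le_floorPrefixSum l m (j := j) (by omega)
  omega

theorem ceilPrefixSum_le_take_append {r : List ℕ} {j : ℕ} (hl : m ≤ l.sum)
    (h : m ≤ ((l ++ r).take j).sum) : ceilPrefixSum l m ≤ ((l ++ r).take j).sum := by
  rw [List.take_append, List.sum_append] at h ⊢
  by_cases hj : j ≤ l.length
  · simp only [Nat.sub_eq_zero_of_le hj, List.take_zero, List.sum_nil, add_zero] at h ⊢
    exact ceilPrefixSum_le l m h
  · have := ceilPrefixSum_le l m (j := l.length) (by simpa using hl)
    rw [List.take_length] at this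
    rw [List.take_of_length_le (by omega)]
    omega

end PrefixSums

/-- An interval `[y, m] ⊆ [1, c − 2]` free of partial sums of `P` is translated by `d` when
it stays below `c`, and otherwise down into `[2, d − 1]`, which lies below `d` plus any partial
sum. -/
theorem sum_sub_floorPrefixSum_le (P : List ℕ) {d c : ℕ} (hd : 1 ≤ d) (hcP : c - d ≤ P.sum) :
    ∑ m ∈ Icc 0 (c - 2), (m - floorPrefixSum P m) ≤
      ∑ k ∈ Icc 2 c, (d + ceilPrefixSum P (k - d) - k) := by
  calc ∑ m ∈ Icc 0 (c - 2), (m - floorPrefixSum P m)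
      = #((Icc 0 (c - 2)).sigma fun m => Ioc (floorPrefixSum P m) m) := by
        simp only [card_sigma, Nat.card_Ioc]
    _ ≤ #((Icc 2 c).sigma fun k => Ico k (d + ceilPrefixSum P (k - d))) := by
      refine card_le_card_of_injOn (fun p : (_ : ℕ) × ℕ =>
        if p.2 + d ≤ c then ⟨p.2 + d, p.1 + d⟩ else ⟨p.2 + 1 - (c - d), p.1 + 1 - (c - d)⟩) ?_ ?_
      · rintro ⟨m, y⟩ hp
        simp only [coe_sigma, Set.mem_sigma_iff, mem_coe, mem_Icc, mem_Ioc] at hp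
        obtain ⟨⟨-, hm⟩, hy, hym⟩ := hp
        dsimp only
        split_ifs with hyc
        · have := lt_ceilPrefixSum_of_floorPrefixSum_lt P m hy (by omega)
          simp only [coe_sigma, Set.mem_sigma_iff, mem_coe, mem_Icc, mem_Ico, Nat.add_sub_cancel]
          omega
        · simp only [coe_sigma, Set.mem_sigma_iff, mem_coe, mem_Icc, mem_Ico]
          omega
      · rintro ⟨m, y⟩ hp ⟨m', y'⟩ hp' heq
        simp only [coe_sigma, Set.mem_sigma_iff, mem_coe, mem_Icc, mem_Ioc] at hp hp'
        have hfst := congrArg Sigma.fst heq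
        have hsnd := congrArg Sigma.snd heq
        obtain ⟨rfl, rfl⟩ : m = m' ∧ y = y' := by
          dsimp only at hfst hsnd
          split_ifs at hfst hsnd <;> simp only at hfst hsnd <;> omega
        rfl
    _ = ∑ k ∈ Icc 2 c, (d + ceilPrefixSum P (k - d) - k) := by
      simp only [card_sigma, Nat.card_Ico]

theorem le_sigmaM {l : List ℕ} {m : ℝ} {j : ℕ} (h : ((l.take j).sum : ℝ) ≤ m) :
    ((l.take j).sum : ℝ) ≤ sigmaM l m := by
  rw [List.take_eq_take_min] at h ⊢
  exact le_csSup ⟨m, by rintro _ ⟨_, _, _, hx⟩; exact hx⟩ ⟨_, min_le_right _ _, rfl, h⟩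

theorem le_sigmaP {l : List ℕ} {m y : ℝ} (hl : m ≤ l.sum)
    (h : ∀ j, m ≤ ((l.take j).sum : ℝ) → y ≤ (l.take j).sum) : y ≤ sigmaP l m :=
  le_csInf ⟨l.sum, l.length, le_rfl, by simp, hl⟩ fun _ ⟨j, _, hx, hmx⟩ => hx ▸ h j (hx ▸ hmx)

theorem thetaM_append_le (L P T : List ℕ) (m : ℕ) :
    thetaM (L ++ P ++ T) ((L.sum + m : ℕ) : ℝ) ≤ ((m - floorPrefixSum P m : ℕ) : ℝ) := by
  obtain ⟨j, hj, hfj⟩ := exists_floorPrefixSum_eq P m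
  have hfm := floorPrefixSum_le P m
  have htake : ((L ++ P ++ T).take (L.length + j)).sum = L.sum + floorPrefixSum P m := by
    rw [List.append_assoc, List.take_length_add_append, List.take_append_of_le_length hj,
      List.sum_append, hfj]
  have hσ := le_sigmaM (l := L ++ P ++ T) (m := ((L.sum + m : ℕ) : ℝ)) (j := L.length + j)
    (by rw [htake]; exact_mod_cast (by omega))
  rw [htake] at hσ
  unfold thetaM
  push_cast [Nat.cast_sub hfm] at hσ ⊢
  linarith

theorem le_thetaP_cons_append {d k : ℕ} (P Q : List ℕ) (hk : 1 ≤ k) (hkP : k - d ≤ P.sum) :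
    ((d + ceilPrefixSum P (k - d) - k : ℕ) : ℝ) ≤ thetaP (d :: (P ++ Q)) k := by
  have hkc : k ≤ d + ceilPrefixSum P (k - d) := by
    have := (ceilPrefixSum_mem P _ hkP).2
    omega
  have hσ : ((d + ceilPrefixSum P (k - d) : ℕ) : ℝ) ≤ sigmaP (d :: (P ++ Q)) k := by
    refine le_sigmaP (by simp only [List.sum_cons, List.sum_append]; exact_mod_cast (by omega))
      fun j hj => ?_
    rcases j with _ | j
    · simp only [List.take_zero, List.sum_nil, Nat.cast_zero] at hj
      exact absurd hj (by exact_mod_cast (by omega : ¬ k ≤ 0))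
    · simp only [List.take_succ_cons, List.sum_cons, Nat.cast_add] at hj ⊢
      have hjk : k ≤ d + ((P ++ Q).take j).sum := by exact_mod_cast hj
      have := ceilPrefixSum_le_take_append P (k - d) hkP (by omega : k - d ≤ ((P ++ Q).take j).sum)
      exact_mod_cast (by omega)
  unfold thetaP
  rw [Nat.cast_sub hkc]
  linarith

theorem exists_phi_decomposition {a : ℕ} {l : List ℕ} (hal : a < l.sum)
    (hA : ∃ k ≤ l.length, (l.drop k).sum = a) :
    ∃ i P Q, l = i :: (P ++ Q) ∧ Q.sum = a ∧ phi a l = i :: (P.reverse ++ Q) := by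
  obtain ⟨k, hkl, hk⟩ := hA
  set S := {j | j ≤ l.length ∧ a ≤ (l.drop j).sum}
  have hSbdd : BddAbove S := ⟨l.length, fun _ hj => hj.1⟩
  have hK : kPhi a l ∈ S := Nat.sSup_mem ⟨k, hkl, hk.ge⟩ hSbdd
  have hkK : k ≤ kPhi a l := le_csSup hSbdd ⟨hkl, hk.ge⟩
  have hQ : (l.drop (kPhi a l)).sum = a :=
    le_antisymm (hk ▸ (l.drop_sublist_drop_left hkK).sum_le_sum fun _ _ => Nat.zero_le _) hK.2
  obtain ⟨K, hKs⟩ : ∃ K, kPhi a l = K + 1 :=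
    Nat.exists_eq_succ_of_ne_zero fun h => by rw [h, List.drop_zero] at hQ; omega
  obtain ⟨i, T, rfl⟩ := List.exists_cons_of_ne_nil (show l ≠ [] by rintro rfl; simp at hal)
  rw [hKs, List.drop_succ_cons] at hQ
  refine ⟨i, T.take K, T.drop K, (congrArg _ (T.take_append_drop K)).symm, hQ, ?_⟩
  simp [phi, hKs]

theorem stmt18_general (a b c n : ℕ) (h2 : 2 ≤ c) (hcb : c ≤ b)
    (hn : n = a + b + c - 1) (I : Composition n)
    (hA : ∃ k ≤ I.blocks.length, (I.blocks.drop k).sum = a) :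
    (DeltaI I.blocks (b + c - 1) : ℝ) ≤
      (∑ k ∈ Finset.Icc 2 c, thetaP I.blocks k)
        - (∑ k ∈ Finset.Icc a (a + c - 2), thetaM (phi a I.blocks).reverse k)
        + (DeltaI I.blocks (b + c - 1) : ℝ) := by
  obtain ⟨d, P, Q, hI, hQ, hφ⟩ := exists_phi_decomposition (by rw [I.blocks_sum]; omega) hA
  have hd : 1 ≤ d := I.blocks_pos (by simp [hI])
  have hsum : d + P.sum + a = n := by
    simpa [hI, hQ, add_assoc] using I.blocks_sum
  have hM : ∑ k ∈ Icc a (a + c - 2), thetaM (phi a I.blocks).reverse k ≤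
      ∑ m ∈ Icc 0 (c - 2), ((m - floorPrefixSum P m : ℕ) : ℝ) := by
    rw [show Icc a (a + c - 2) = (Icc 0 (c - 2)).map (addLeftEmbedding a) by
      rw [map_add_left_Icc]; congr 1; omega, sum_map]
    refine sum_le_sum fun m _ => ?_
    simpa [hφ, hQ] using thetaM_append_le Q.reverse P [d] m
  have hP : ∑ k ∈ Icc 2 c, ((d + ceilPrefixSum P (k - d) - k : ℕ) : ℝ) ≤
      ∑ k ∈ Icc 2 c, thetaP I.blocks k :=
    sum_le_sum fun k hk => by
      rw [mem_Icc] at hk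
      exact hI ▸ le_thetaP_cons_append P Q (by omega) (by omega)
  have hcore : ∑ m ∈ Icc 0 (c - 2), ((m - floorPrefixSum P m : ℕ) : ℝ) ≤
      ∑ k ∈ Icc 2 c, ((d + ceilPrefixSum P (k - d) - k : ℕ) : ℝ) := by
    exact_mod_cast sum_sub_floorPrefixSum_le P hd (by omega)
  linarith

/-- For `a ≥ b ≥ c ≥ 2` and `I ∈ A` (i.e. `w_I > 0` and some suffix of `I` has modulus
exactly `a`), `c'_I ≥ Δ_I(b+c−1)`, i.e.
`Σ_{k=2}^{c} Θ⁺_I(k) − Σ_{k=a}^{a+c−2} Θ⁻_{reverse(φ(I))}(k) + Δ_I(b+c−1) ≥ Δ_I(b+c−1)`. -/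
theorem stmt18 (a b c n : ℕ) (h2 : 2 ≤ c) (hcb : c ≤ b) (hba : b ≤ a)
    (hn : n = a + b + c - 1) (I : Composition n) (hw : 0 < wI I.blocks)
    (hA : ∃ k ≤ I.blocks.length, (I.blocks.drop k).sum = a) :
    (DeltaI I.blocks (b + c - 1) : ℝ) ≤
      (∑ k ∈ Finset.Icc 2 c, thetaP I.blocks k)
        - (∑ k ∈ Finset.Icc a (a + c - 2), thetaM (phi a I.blocks).reverse k)
        + (DeltaI I.blocks (b + c - 1) : ℝ) :=
  stmt18_general a b c n h2 hcb hn I hA
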